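/- arXiv:2110.12786 — 3 statements merged into one kernel-verified Lean document; each statement's English description precedes it below -/
import Mathlib

section
/- Let M, N be positive integers, ρ > 0, and let X̂ be a real M×N matrix. Define the matrix X* column-by-column by X*_{:,n} = max(0, 1 − 1/(ρ ‖X̂_{:,n}‖₂)) • X̂_{:,n} when X̂_{:,n} ≠ 0 and X*_{:,n} = 0 when X̂_{:,n} = 0. Then X* minimizes the function X ↦ ‖X‖_{2,1} + (ρ/2) ‖X − X̂‖_F² over all real M×N matrices X. -/
/-- The Euclidean norm of the n-th column of a real M×N matrix. -/
noncomputable def colNorm {M N : ℕ} (Z : Matrix (Fin M) (Fin N) ℝ) (n : Fin N) : ℝ :=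
  Real.sqrt (∑ i : Fin M, (Z i n) ^ 2)

/-- The ℓ_{2,1} norm of a real M×N matrix: the sum of the Euclidean
norms of its columns. -/
noncomputable def l21Norm {M N : ℕ} (Z : Matrix (Fin M) (Fin N) ℝ) : ℝ :=
  ∑ n : Fin N, colNorm Z n

/-- The Frobenius norm of a real M×N matrix. -/
noncomputable def frobNorm {M N : ℕ} (A : Matrix (Fin M) (Fin N) ℝ) : ℝ :=
  Real.sqrt (∑ i : Fin M, ∑ j : Fin N, (A i j) ^ 2)

/-!
Both terms of the objective split over the columns, so it suffices to minimise
`‖x‖ + (ρ/2) ‖x - v‖²` over a single vector `x`. A point `x` is a minimiser as soon as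
`g = ρ (v - x)` is a subgradient of the norm at `x`, i.e. `‖g‖ ≤ 1` and `⟪g, x⟫ = ‖x‖`:
then `‖u‖ ≥ ‖x‖ + ⟪g, u - x⟫` and the quadratic term contributes `-⟪g, u - x⟫` plus a
nonnegative remainder. For the block soft-threshold `x = max 0 (1 - 1/(ρ‖v‖)) • v` one
checks this directly: `x = 0, g = ρ v` if `ρ ‖v‖ ≤ 1`, and `g = v / ‖v‖` otherwise.
-/

open RealInnerProductSpace

section Prox

variable {E : Type*} [NormedAddCommGroup E] [InnerProductSpace ℝ E]

theorem norm_add_inner_sub_le_norm {g x : E} (hg : ‖g‖ ≤ 1) (hgx : ⟪g, x⟫ = ‖x‖) (u : E) :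
    ‖x‖ + ⟪g, u - x⟫ ≤ ‖u‖ :=
  calc ‖x‖ + ⟪g, u - x⟫ = ⟪g, u⟫ := by rw [inner_sub_right, hgx]; ring
    _ ≤ ‖g‖ * ‖u‖ := real_inner_le_norm g u
    _ ≤ ‖u‖ := mul_le_of_le_one_left (norm_nonneg u) hg

theorem norm_sub_sq_add_two_inner_le (x u v : E) :
    ‖x - v‖ ^ 2 + 2 * ⟪x - v, u - x⟫ ≤ ‖u - v‖ ^ 2 := by
  have h : u - v = (x - v) + (u - x) := by abel
  rw [h, norm_add_sq_real]
  nlinarith [sq_nonneg ‖u - x‖]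

theorem norm_add_half_sq_dist_le_of_subgradient {ρ : ℝ} (hρ : 0 ≤ ρ) {v x : E}
    (hg : ‖ρ • (v - x)‖ ≤ 1) (hgx : ⟪ρ • (v - x), x⟫ = ‖x‖) (u : E) :
    ‖x‖ + ρ / 2 * ‖x - v‖ ^ 2 ≤ ‖u‖ + ρ / 2 * ‖u - v‖ ^ 2 := by
  have hnorm := norm_add_inner_sub_le_norm hg hgx u
  have hquad := mul_le_mul_of_nonneg_left (norm_sub_sq_add_two_inner_le x u v) hρ
  have hcancel : ⟪ρ • (v - x), u - x⟫ = -(ρ * ⟪x - v, u - x⟫) := by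
    rw [real_inner_smul_left, ← neg_sub x v, inner_neg_left]; ring
  linarith

/-- Block soft-thresholding at level `1 / ρ`. -/
noncomputable def blockSoftThreshold (ρ : ℝ) (v : E) : E :=
  max 0 (1 - 1 / (ρ * ‖v‖)) • v

theorem blockSoftThreshold_zero (ρ : ℝ) : blockSoftThreshold ρ (0 : E) = 0 :=
  smul_zero _

theorem blockSoftThreshold_eq_zero_of_le {ρ : ℝ} (hρ : 0 < ρ) {v : E} (hv : ρ * ‖v‖ ≤ 1) :
    blockSoftThreshold ρ v = 0 := by
  rcases eq_or_ne v 0 with rfl | hv0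
  · exact blockSoftThreshold_zero ρ
  have hpos : 0 < ρ * ‖v‖ := mul_pos hρ (norm_pos_iff.mpr hv0)
  have hcoef : max 0 (1 - 1 / (ρ * ‖v‖)) = 0 :=
    max_eq_left (by linarith [one_le_one_div hpos hv])
  rw [blockSoftThreshold, hcoef, zero_smul]

theorem blockSoftThreshold_subgradient {ρ : ℝ} (hρ : 0 < ρ) (v : E) :
    ‖ρ • (v - blockSoftThreshold ρ v)‖ ≤ 1 ∧
      ⟪ρ • (v - blockSoftThreshold ρ v), blockSoftThreshold ρ v⟫ = ‖blockSoftThreshold ρ v‖ := by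
  rcases le_or_gt (ρ * ‖v‖) 1 with hle | hgt
  · rw [blockSoftThreshold_eq_zero_of_le hρ hle, sub_zero, norm_smul, Real.norm_of_nonneg hρ.le,
      inner_zero_right, norm_zero]
    exact ⟨hle, rfl⟩
  · have hv : 0 < ‖v‖ := pos_of_mul_pos_right (by linarith) hρ.le
    have hρv : 0 < ρ * ‖v‖ := by linarith
    have hc0 : 0 ≤ 1 - 1 / (ρ * ‖v‖) := by rw [sub_nonneg, div_le_one hρv]; exact hgt.le
    have hx : blockSoftThreshold ρ v = (1 - 1 / (ρ * ‖v‖)) • v := by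
      rw [blockSoftThreshold, max_eq_right hc0]
    have hg : ρ • (v - blockSoftThreshold ρ v) = ‖v‖⁻¹ • v := by
      rw [hx, sub_smul, one_smul, sub_sub_cancel, smul_smul]
      congr 1
      field_simp
    rw [hg, hx, norm_smul, norm_inv, norm_norm, inv_mul_cancel₀ hv.ne', real_inner_smul_left,
      real_inner_smul_right, real_inner_self_eq_norm_sq, norm_smul, Real.norm_of_nonneg hc0]
    refine ⟨le_rfl, ?_⟩
    field_simp

theorem blockSoftThreshold_le {ρ : ℝ} (hρ : 0 < ρ) (v u : E) :
    ‖blockSoftThreshold ρ v‖ + ρ / 2 * ‖blockSoftThreshold ρ v - v‖ ^ 2 ≤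
      ‖u‖ + ρ / 2 * ‖u - v‖ ^ 2 :=
  have ⟨hg, hgx⟩ := blockSoftThreshold_subgradient hρ v
  norm_add_half_sq_dist_le_of_subgradient hρ.le hg hgx u

end Prox

noncomputable def colVec {M N : ℕ} (Z : Matrix (Fin M) (Fin N) ℝ) (n : Fin N) :
    EuclideanSpace ℝ (Fin M) :=
  WithLp.toLp 2 fun i => Z i n

theorem colNorm_eq_norm_colVec {M N : ℕ} (Z : Matrix (Fin M) (Fin N) ℝ) (n : Fin N) :
    colNorm Z n = ‖colVec Z n‖ := by
  simp only [colNorm, EuclideanSpace.norm_eq, colVec, Real.norm_eq_abs, sq_abs]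

theorem colVec_sub {M N : ℕ} (A B : Matrix (Fin M) (Fin N) ℝ) (n : Fin N) :
    colVec (A - B) n = colVec A n - colVec B n := rfl

theorem frobNorm_sq {M N : ℕ} (A : Matrix (Fin M) (Fin N) ℝ) :
    frobNorm A ^ 2 = ∑ n : Fin N, colNorm A n ^ 2 := by
  rw [frobNorm, Real.sq_sqrt (by positivity), Finset.sum_comm]
  refine Finset.sum_congr rfl fun n _ => ?_
  rw [colNorm, Real.sq_sqrt (by positivity)]

theorem l21Norm_add_frobNorm_sub_sq {M N : ℕ} (ρ : ℝ) (X Y : Matrix (Fin M) (Fin N) ℝ) :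
    l21Norm X + ρ / 2 * frobNorm (X - Y) ^ 2 =
      ∑ n : Fin N, (‖colVec X n‖ + ρ / 2 * ‖colVec X n - colVec Y n‖ ^ 2) := by
  simp only [l21Norm, frobNorm_sq, colNorm_eq_norm_colVec, colVec_sub, Finset.mul_sum,
    Finset.sum_add_distrib]

theorem stmt_4_general (M N : ℕ) (ρ : ℝ) (hρ : 0 < ρ)
    (Xhat Xstar : Matrix (Fin M) (Fin N) ℝ)
    (hpos : ∀ n : Fin N, (∃ i, Xhat i n ≠ 0) →
      ∀ i, Xstar i n = max 0 (1 - 1 / (ρ * colNorm Xhat n)) * Xhat i n)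
    (hzero : ∀ n : Fin N, (∀ i, Xhat i n = 0) → ∀ i, Xstar i n = 0) :
    ∀ X : Matrix (Fin M) (Fin N) ℝ,
      l21Norm Xstar + ρ / 2 * (frobNorm (Xstar - Xhat)) ^ 2 ≤
        l21Norm X + ρ / 2 * (frobNorm (X - Xhat)) ^ 2 := by
  intro X
  have hcol : ∀ n, colVec Xstar n = blockSoftThreshold ρ (colVec Xhat n) := by
    intro n
    by_cases h : ∃ i, Xhat i n ≠ 0
    · ext i
      simp [colVec, blockSoftThreshold, hpos n h i, colNorm_eq_norm_colVec]
    · push Not at h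
      have hXhat : colVec Xhat n = 0 := by ext i; exact h i
      rw [hXhat, blockSoftThreshold_zero]
      ext i; exact hzero n h i
  rw [l21Norm_add_frobNorm_sub_sq, l21Norm_add_frobNorm_sub_sq]
  refine Finset.sum_le_sum fun n _ => ?_
  rw [hcol]
  exact blockSoftThreshold_le hρ _ _

/-- Columnwise block soft-thresholding solves the proximal
problem `min_X ‖X‖_{2,1} + (ρ/2) ‖X − X̂‖_F²`. -/
theorem stmt_4 (M N : ℕ) (hM : 0 < M) (hN : 0 < N) (ρ : ℝ) (hρ : 0 < ρ)
    (Xhat Xstar : Matrix (Fin M) (Fin N) ℝ)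
    (hpos : ∀ n : Fin N, (∃ i, Xhat i n ≠ 0) →
      ∀ i, Xstar i n = max 0 (1 - 1 / (ρ * colNorm Xhat n)) * Xhat i n)
    (hzero : ∀ n : Fin N, (∀ i, Xhat i n = 0) → ∀ i, Xstar i n = 0) :
    ∀ X : Matrix (Fin M) (Fin N) ℝ,
      l21Norm Xstar + ρ / 2 * (frobNorm (Xstar - Xhat)) ^ 2 ≤
        l21Norm X + ρ / 2 * (frobNorm (X - Xhat)) ^ 2 :=
  stmt_4_general M N ρ hρ Xhat Xstar hpos hzero
end

section
/- Let M, N be positive integers and let A be a real M×N matrix. Then for every real M×N matrix B with rank(B) ≤ 1, one has ‖A − B‖_F² ≥ ‖A‖_F² − ‖A‖₂², where ‖A‖₂ denotes the spectral norm of A. -/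
/-- The spectral norm (ℓ²→ℓ² operator norm) of a real M×N matrix:
the supremum of `‖A v‖₂` over unit vectors `v`. -/
noncomputable def specNorm {M N : ℕ} (A : Matrix (Fin M) (Fin N) ℝ) : ℝ :=
  sSup {r : ℝ | ∃ v : Fin N → ℝ, Real.sqrt (∑ j : Fin N, (v j) ^ 2) = 1 ∧
    r = Real.sqrt (∑ i : Fin M, (A.mulVec v i) ^ 2)}

open Finset

section Aux
variable {M N : ℕ} (A : Matrix (Fin M) (Fin N) ℝ)

lemma frob_sq (A : Matrix (Fin M) (Fin N) ℝ) :
    (frobNorm A) ^ 2 = ∑ i : Fin M, ∑ j : Fin N, (A i j) ^ 2 := by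
  rw [frobNorm, Real.sq_sqrt]
  positivity

lemma specSet_bdd (A : Matrix (Fin M) (Fin N) ℝ) :
    frobNorm A ∈ upperBounds {r : ℝ | ∃ v : Fin N → ℝ,
      Real.sqrt (∑ j : Fin N, (v j) ^ 2) = 1 ∧
      r = Real.sqrt (∑ i : Fin M, (A.mulVec v i) ^ 2)} := by
  rintro r ⟨v, hv, rfl⟩
  have hv1 : ∑ j : Fin N, (v j) ^ 2 = 1 := Real.sqrt_eq_one.mp hv
  apply Real.sqrt_le_sqrt
  apply Finset.sum_le_sum
  intro i _
  calc (A.mulVec v i) ^ 2 = (∑ j : Fin N, A i j * v j) ^ 2 := by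
        simp [Matrix.mulVec, dotProduct]
    _ ≤ (∑ j : Fin N, (A i j) ^ 2) * ∑ j : Fin N, (v j) ^ 2 :=
        Finset.sum_mul_sq_le_sq_mul_sq _ _ _
    _ = ∑ j : Fin N, (A i j) ^ 2 := by rw [hv1, mul_one]

lemma sqrt_le_specNorm (A : Matrix (Fin M) (Fin N) ℝ) (v : Fin N → ℝ)
    (hv : ∑ j : Fin N, (v j) ^ 2 = 1) :
    Real.sqrt (∑ i : Fin M, (A.mulVec v i) ^ 2) ≤ specNorm A := by
  have hmem : Real.sqrt (∑ i : Fin M, (A.mulVec v i) ^ 2) ∈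
      {r : ℝ | ∃ v : Fin N → ℝ, Real.sqrt (∑ j : Fin N, (v j) ^ 2) = 1 ∧
        r = Real.sqrt (∑ i : Fin M, (A.mulVec v i) ^ 2)} :=
    ⟨v, by rw [hv, Real.sqrt_one], rfl⟩
  exact le_csSup ⟨frobNorm A, specSet_bdd A⟩ hmem

lemma mulVec_sq_le_specNorm_sq (A : Matrix (Fin M) (Fin N) ℝ) (v : Fin N → ℝ)
    (hv : ∑ j : Fin N, (v j) ^ 2 = 1) :
    ∑ i : Fin M, (A.mulVec v i) ^ 2 ≤ (specNorm A) ^ 2 := by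
  have hle := sqrt_le_specNorm A v hv
  have h0 : (0:ℝ) ≤ Real.sqrt (∑ i : Fin M, (A.mulVec v i) ^ 2) := Real.sqrt_nonneg _
  calc ∑ i : Fin M, (A.mulVec v i) ^ 2
      = (Real.sqrt (∑ i : Fin M, (A.mulVec v i) ^ 2)) ^ 2 := by
        rw [Real.sq_sqrt]; positivity
    _ ≤ (specNorm A) ^ 2 := by
        apply pow_le_pow_left₀ h0 hle

lemma specNorm_nonneg (A : Matrix (Fin M) (Fin N) ℝ) (hN : 0 < N) : 0 ≤ specNorm A := by
  have hv : ∑ j : Fin N, ((Pi.single (⟨0, hN⟩ : Fin N) 1 : Fin N → ℝ) j) ^ 2 = 1 := by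
    simp [Pi.single_apply]
  exact le_trans (Real.sqrt_nonneg _) (sqrt_le_specNorm A _ hv)

end Aux

lemma key_ineq {M N : ℕ} (A : Matrix (Fin M) (Fin N) ℝ) (u : Fin M → ℝ) (v : Fin N → ℝ)
    (hv : ∑ j : Fin N, (v j) ^ 2 = 1) :
    (∑ i : Fin M, ∑ j : Fin N, (A i j) ^ 2) - (∑ i : Fin M, (A.mulVec v i) ^ 2)
      ≤ ∑ i : Fin M, ∑ j : Fin N, (A i j - u i * v j) ^ 2 := by
  have hm : ∀ i, A.mulVec v i = ∑ j : Fin N, A i j * v j := fun i => by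
    simp [Matrix.mulVec, dotProduct]
  have per : ∀ i ∈ (univ : Finset (Fin M)),
      (∑ j : Fin N, (A i j) ^ 2) - (A.mulVec v i) ^ 2
        ≤ ∑ j : Fin N, (A i j - u i * v j) ^ 2 := by
    intro i _
    have hexp : ∑ j : Fin N, (A i j - u i * v j) ^ 2
        = (∑ j : Fin N, (A i j) ^ 2) - 2 * u i * (∑ j : Fin N, A i j * v j)
          + (u i) ^ 2 * (∑ j : Fin N, (v j) ^ 2) := by
      rw [Finset.mul_sum, Finset.mul_sum, ← Finset.sum_sub_distrib, ← Finset.sum_add_distrib]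
      exact Finset.sum_congr rfl fun j _ => by ring
    rw [hexp, hv, hm i]
    nlinarith [sq_nonneg (u i - ∑ j : Fin N, A i j * v j)]
  calc (∑ i : Fin M, ∑ j : Fin N, (A i j) ^ 2) - (∑ i : Fin M, (A.mulVec v i) ^ 2)
      = ∑ i : Fin M, ((∑ j : Fin N, (A i j) ^ 2) - (A.mulVec v i) ^ 2) := by
        rw [Finset.sum_sub_distrib]
    _ ≤ _ := Finset.sum_le_sum per

/-- For any rank-at-most-one matrix B,
`‖A − B‖_F² ≥ ‖A‖_F² − ‖A‖₂²`. -/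
theorem stmt_6 (M N : ℕ) (hM : 0 < M) (hN : 0 < N)
    (A : Matrix (Fin M) (Fin N) ℝ) :
    ∀ B : Matrix (Fin M) (Fin N) ℝ, B.rank ≤ 1 →
      (frobNorm (A - B)) ^ 2 ≥ (frobNorm A) ^ 2 - (specNorm A) ^ 2 := by
  intro B hB
  -- decompose B
  rw [Matrix.rank] at hB
  obtain ⟨w, hw⟩ := finrank_le_one_iff.mp hB
  have hcol : ∀ j : Fin N, ∃ c : ℝ, ∀ i, c * (w : Fin M → ℝ) i = B i j := by
    intro j
    obtain ⟨c, hc⟩ := hw ⟨B.mulVec (Pi.single j 1), LinearMap.mem_range_self _ _⟩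
    refine ⟨c, fun i => ?_⟩
    have h2 := congrArg (fun x : ↥(LinearMap.range B.mulVecLin) => (x : Fin M → ℝ) i) hc
    simpa [Matrix.mulVec_single] using h2
  choose c hc using hcol
  set s : ℝ := ∑ j : Fin N, (c j) ^ 2 with hs
  rcases eq_or_lt_of_le (Finset.sum_nonneg fun j _ => sq_nonneg (c j)) with h0 | hpos
  · -- s = 0, so B = 0
    have hc0 : ∀ j, c j = 0 := by
      intro j
      have := (Finset.sum_eq_zero_iff_of_nonneg (fun j _ => sq_nonneg (c j))).mp h0.symm j
        (Finset.mem_univ j)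
      exact pow_eq_zero_iff (two_ne_zero) |>.mp this
    have hB0 : A - B = A := by
      ext i j
      have h3 := hc j i
      rw [hc0 j, zero_mul] at h3
      simp [Matrix.sub_apply, ← h3]
    rw [hB0]
    nlinarith [sq_nonneg (specNorm A)]
  · -- s > 0
    set t : ℝ := Real.sqrt s with ht
    have hts : t ^ 2 = s := Real.sq_sqrt hpos.le
    have htpos : 0 < t := Real.sqrt_pos.mpr hpos
    set v : Fin N → ℝ := fun j => c j / t with hvdef
    set u : Fin M → ℝ := fun i => t * (w : Fin M → ℝ) i with hudef
    have hv1 : ∑ j : Fin N, (v j) ^ 2 = 1 := by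
      simp only [hvdef, div_pow, ← Finset.sum_div]
      rw [← hs, hts]  -- may need adjusting
      exact div_self (ne_of_gt hpos)
    have hBij : ∀ i j, B i j = u i * v j := by
      intro i j
      rw [hudef, hvdef, ← hc j i]
      field_simp
    have hfs := frob_sq (A - B)
    have heq : ∑ i : Fin M, ∑ j : Fin N, ((A - B) i j) ^ 2
        = ∑ i : Fin M, ∑ j : Fin N, (A i j - u i * v j) ^ 2 := by
      refine Finset.sum_congr rfl fun i _ => Finset.sum_congr rfl fun j _ => ?_
      rw [Matrix.sub_apply, hBij i j]
    have hkey := key_ineq A u v hv1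
    have hspec := mulVec_sq_le_specNorm_sq A v hv1
    have hfa := frob_sq A
    rw [hfs, heq]
    linarith
end

section
/- Let M, N be positive integers, let σ > 0, let u ∈ ℝ^M and v ∈ ℝ^N be unit vectors, and set A₁ = σ • u vᵀ. Let A_⊥ be a real M×N matrix with uᵀ A_⊥ = 0, A_⊥ v = 0, and spectral norm ‖A_⊥‖₂ < σ. Then A₁ is the unique minimizer of B ↦ ‖(A₁ + A_⊥) − B‖_F over real M×N matrices B with rank(B) ≤ 1: for every such B with B ≠ A₁ one has ‖(A₁ + A_⊥) − B‖_F > ‖A_⊥‖_F = ‖(A₁ + A_⊥) − A₁‖_F. -/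
/- ### Auxiliary lemmas -/

/-- Cauchy–Schwarz with square roots. -/
lemma cs_sqrt {ι : Type*} [Fintype ι] (f g : ι → ℝ) :
    ∑ i, f i * g i ≤ Real.sqrt (∑ i, f i ^ 2) * Real.sqrt (∑ i, g i ^ 2) := by
  have h := Finset.sum_mul_sq_le_sq_mul_sq Finset.univ f g
  calc ∑ i, f i * g i ≤ |∑ i, f i * g i| := le_abs_self _
    _ = Real.sqrt ((∑ i, f i * g i) ^ 2) := (Real.sqrt_sq_eq_abs _).symm
    _ ≤ Real.sqrt ((∑ i, f i ^ 2) * ∑ i, g i ^ 2) := Real.sqrt_le_sqrt h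
    _ = _ := Real.sqrt_mul (Finset.sum_nonneg fun i _ => sq_nonneg _) _

/-- A matrix of rank at most one is an outer product. -/
lemma rank_le_one_outer {M N : ℕ} (B : Matrix (Fin M) (Fin N) ℝ) (h : B.rank ≤ 1) :
    ∃ x : Fin M → ℝ, ∃ y : Fin N → ℝ, ∀ i j, B i j = x i * y j := by
  rw [Matrix.rank] at h
  obtain ⟨x, hx⟩ := (Submodule.finrank_le_one_iff_isPrincipal _).mp h
  have hcol : ∀ j, ∃ c : ℝ, ∀ i, B i j = c * x i := by
    intro j
    have hmem : B.mulVec (Pi.single j 1) ∈ LinearMap.range B.mulVecLin :=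
      ⟨Pi.single j 1, rfl⟩
    rw [hx, Submodule.mem_span_singleton] at hmem
    obtain ⟨c, hc⟩ := hmem
    refine ⟨c, fun i => ?_⟩
    have := congrFun hc i
    simp [Matrix.mulVec_single] at this
    simpa [mul_comm] using this.symm
  choose y hy using hcol
  exact ⟨x, y, fun i j => by rw [hy j i]; ring⟩

/-- The defining set of `specNorm` is bounded above. -/
lemma spec_bdd {M N : ℕ} (A : Matrix (Fin M) (Fin N) ℝ) :
    BddAbove {r : ℝ | ∃ v : Fin N → ℝ, Real.sqrt (∑ j : Fin N, (v j) ^ 2) = 1 ∧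
      r = Real.sqrt (∑ i : Fin M, (A.mulVec v i) ^ 2)} := by
  refine ⟨Real.sqrt (∑ i, ∑ j, (A i j) ^ 2), fun r hr => ?_⟩
  obtain ⟨w, hw, rfl⟩ := hr
  have hw1 : ∑ j, (w j) ^ 2 = 1 := Real.sqrt_eq_one.mp hw
  apply Real.sqrt_le_sqrt
  apply Finset.sum_le_sum
  intro i _
  have h := Finset.sum_mul_sq_le_sq_mul_sq Finset.univ (fun j => A i j) w
  simpa [Matrix.mulVec, dotProduct, hw1] using h

/-- The bilinear form is controlled by the spectral norm. -/
lemma spec_bound {M N : ℕ} (A : Matrix (Fin M) (Fin N) ℝ)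
    (x : Fin M → ℝ) (y : Fin N → ℝ) :
    ∑ i, ∑ j, x i * A i j * y j
      ≤ specNorm A * (Real.sqrt (∑ i, x i ^ 2) * Real.sqrt (∑ j, y j ^ 2)) := by
  rcases eq_or_lt_of_le (Finset.sum_nonneg fun j (_ : j ∈ Finset.univ) => sq_nonneg (y j))
    with hY | hY
  · have hyz : ∀ j, y j = 0 := by
      intro j
      have h := (Finset.sum_eq_zero_iff_of_nonneg (fun j _ => sq_nonneg (y j))).mp hY.symm
      exact pow_eq_zero_iff two_ne_zero |>.mp (h j (Finset.mem_univ _))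
    simp [hyz]
  · set c := Real.sqrt (∑ j, y j ^ 2) with hc
    have hcpos : 0 < c := Real.sqrt_pos.mpr hY
    set w : Fin N → ℝ := fun j => c⁻¹ * y j with hwdef
    have hw : Real.sqrt (∑ j, (w j) ^ 2) = 1 := by
      have h1 : ∑ j, (w j) ^ 2 = c⁻¹ ^ 2 * ∑ j, y j ^ 2 := by
        simp [hwdef, mul_pow, Finset.mul_sum]
      rw [h1, Real.sqrt_mul (sq_nonneg _), Real.sqrt_sq (inv_pos.mpr hcpos).le, ← hc,
        inv_mul_cancel₀ hcpos.ne']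
    have hr : Real.sqrt (∑ i, (A.mulVec w i) ^ 2) ≤ specNorm A := by
      rw [specNorm]; exact le_csSup (spec_bdd A) ⟨w, hw, rfl⟩
    have hyw : ∀ j, y j = c * w j := by
      intro j; simp [hwdef]; field_simp
    calc ∑ i, ∑ j, x i * A i j * y j = c * ∑ i, x i * A.mulVec w i := by
          rw [Finset.mul_sum]
          refine Finset.sum_congr rfl fun i _ => ?_
          simp only [Matrix.mulVec, dotProduct, Finset.mul_sum]
          refine Finset.sum_congr rfl fun j _ => by rw [hyw j]; ring
      _ ≤ c * (Real.sqrt (∑ i, x i ^ 2) * Real.sqrt (∑ i, (A.mulVec w i) ^ 2)) :=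
          mul_le_mul_of_nonneg_left (cs_sqrt x _) hcpos.le
      _ ≤ c * (Real.sqrt (∑ i, x i ^ 2) * specNorm A) :=
          mul_le_mul_of_nonneg_left
            (mul_le_mul_of_nonneg_left hr (Real.sqrt_nonneg _)) hcpos.le
      _ = specNorm A * (Real.sqrt (∑ i, x i ^ 2) * c) := by ring

/-- Factorization of a separable double sum of squares. -/
lemma dsum_sep {M N : ℕ} (σ : ℝ) (u x : Fin M → ℝ) (v y : Fin N → ℝ) :
    ∑ i, ∑ j, (σ * u i * v j - x i * y j) ^ 2
      = σ ^ 2 * ((∑ i, u i ^ 2) * (∑ j, v j ^ 2))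
        - 2 * σ * ((∑ i, u i * x i) * (∑ j, v j * y j))
        + (∑ i, x i ^ 2) * (∑ j, y j ^ 2) := by
  rw [Finset.sum_mul_sum, Finset.sum_mul_sum, Finset.sum_mul_sum,
    Finset.mul_sum, Finset.mul_sum, ← Finset.sum_sub_distrib, ← Finset.sum_add_distrib]
  refine Finset.sum_congr rfl fun i _ => ?_
  rw [Finset.mul_sum, Finset.mul_sum, ← Finset.sum_sub_distrib, ← Finset.sum_add_distrib]
  exact Finset.sum_congr rfl fun j _ => by ring

/-- Norm of the component orthogonal to a unit vector. -/
lemma perp_sum {M : ℕ} (u x : Fin M → ℝ) (hu : ∑ i, u i ^ 2 = 1) (a : ℝ)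
    (ha : a = ∑ i, u i * x i) :
    ∑ i, (x i - a * u i) ^ 2 = (∑ i, x i ^ 2) - a ^ 2 := by
  have h : ∑ i, (x i - a * u i) ^ 2
      = (∑ i, x i ^ 2) - 2 * a * (∑ i, u i * x i) + a ^ 2 * (∑ i, u i ^ 2) := by
    rw [Finset.mul_sum, Finset.mul_sum, ← Finset.sum_sub_distrib, ← Finset.sum_add_distrib]
    exact Finset.sum_congr rfl fun i _ => by ring
  rw [h, hu, ← ha]; ring

/-- `A₁ = σ • u vᵀ` is the unique best rank-at-most-one
approximation of `A₁ + A_⊥` when `uᵀ A_⊥ = 0`, `A_⊥ v = 0` and `‖A_⊥‖₂ < σ`. -/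
theorem stmt_8 (M N : ℕ) (hM : 0 < M) (hN : 0 < N)
    (σ : ℝ) (hσ : 0 < σ)
    (u : Fin M → ℝ) (v : Fin N → ℝ)
    (hu : Real.sqrt (∑ i : Fin M, (u i) ^ 2) = 1)
    (hv : Real.sqrt (∑ j : Fin N, (v j) ^ 2) = 1)
    (Aperp : Matrix (Fin M) (Fin N) ℝ)
    (hleft : Matrix.vecMul u Aperp = 0)
    (hright : Aperp.mulVec v = 0)
    (hspec : specNorm Aperp < σ) :
    (∀ B : Matrix (Fin M) (Fin N) ℝ, B.rank ≤ 1 → B ≠ σ • Matrix.vecMulVec u v →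
      frobNorm ((σ • Matrix.vecMulVec u v + Aperp) - B) > frobNorm Aperp) ∧
    frobNorm Aperp =
      frobNorm ((σ • Matrix.vecMulVec u v + Aperp) - σ • Matrix.vecMulVec u v) := by
  have hUsum : ∑ i, u i ^ 2 = 1 := Real.sqrt_eq_one.mp hu
  have hVsum : ∑ j, v j ^ 2 = 1 := Real.sqrt_eq_one.mp hv
  have hleft' : ∀ j, ∑ i, u i * Aperp i j = 0 := by
    intro j
    have h := congrFun hleft j
    simpa [Matrix.vecMul, dotProduct] using h
  have hright' : ∀ i, ∑ j, Aperp i j * v j = 0 := by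
    intro i
    have h := congrFun hright i
    simpa [Matrix.mulVec, dotProduct] using h
  have h0uy : ∀ y' : Fin N → ℝ, ∑ i, ∑ j, u i * Aperp i j * y' j = 0 := by
    intro y'
    rw [Finset.sum_comm]
    refine Finset.sum_eq_zero fun j _ => ?_
    have h : ∑ i, u i * Aperp i j * y' j = (∑ i, u i * Aperp i j) * y' j :=
      (Finset.sum_mul _ _ _).symm
    rw [h, hleft' j, zero_mul]
  have h0xv : ∀ x' : Fin M → ℝ, ∑ i, ∑ j, x' i * Aperp i j * v j = 0 := by
    intro x'
    refine Finset.sum_eq_zero fun i _ => ?_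
    have h : ∑ j, x' i * Aperp i j * v j = x' i * ∑ j, Aperp i j * v j := by
      rw [Finset.mul_sum]
      exact Finset.sum_congr rfl fun j _ => by ring
    rw [h, hright' i, mul_zero]
  constructor
  · intro B hrank hne
    obtain ⟨x, y, hxy⟩ := rank_le_one_outer B hrank
    -- entrywise description of the goal
    have hgoal : frobNorm ((σ • Matrix.vecMulVec u v + Aperp) - B)
        = Real.sqrt (∑ i, ∑ j, (σ * u i * v j + Aperp i j - x i * y j) ^ 2) := by
      unfold frobNorm
      congr 1
      refine Finset.sum_congr rfl fun i _ => Finset.sum_congr rfl fun j _ => ?_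
      simp [Matrix.sub_apply, Matrix.add_apply, Matrix.smul_apply, Matrix.vecMulVec_apply,
        smul_eq_mul, hxy i j, mul_assoc]
    -- split the squared Frobenius norm
    have hcross : ∑ i, ∑ j, Aperp i j * (σ * u i * v j - x i * y j)
        = σ * (∑ i, ∑ j, u i * Aperp i j * v j) - ∑ i, ∑ j, x i * Aperp i j * y j := by
      rw [Finset.mul_sum, ← Finset.sum_sub_distrib]
      refine Finset.sum_congr rfl fun i _ => ?_
      rw [Finset.mul_sum, ← Finset.sum_sub_distrib]
      exact Finset.sum_congr rfl fun j _ => by ring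
    have hS : ∑ i, ∑ j, (σ * u i * v j + Aperp i j - x i * y j) ^ 2
        = (∑ i, ∑ j, (σ * u i * v j - x i * y j) ^ 2) + (∑ i, ∑ j, (Aperp i j) ^ 2)
          - 2 * (∑ i, ∑ j, x i * Aperp i j * y j) := by
      have h1 : ∑ i, ∑ j, (σ * u i * v j + Aperp i j - x i * y j) ^ 2
          = (∑ i, ∑ j, (σ * u i * v j - x i * y j) ^ 2) + (∑ i, ∑ j, (Aperp i j) ^ 2)
            + 2 * (∑ i, ∑ j, Aperp i j * (σ * u i * v j - x i * y j)) := by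
        rw [Finset.mul_sum, ← Finset.sum_add_distrib, ← Finset.sum_add_distrib]
        refine Finset.sum_congr rfl fun i _ => ?_
        rw [Finset.mul_sum, ← Finset.sum_add_distrib, ← Finset.sum_add_distrib]
        exact Finset.sum_congr rfl fun j _ => by ring
      rw [h1, hcross, h0uy v, mul_zero, zero_sub]
      ring
    -- abbreviations
    set a : ℝ := ∑ i, u i * x i with ha
    set b : ℝ := ∑ j, v j * y j with hb
    -- closed form of the separable part
    have hD : ∑ i, ∑ j, (σ * u i * v j - x i * y j) ^ 2
        = σ ^ 2 - 2 * σ * (a * b) + (∑ i, x i ^ 2) * (∑ j, y j ^ 2) := by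
      rw [dsum_sep, hUsum, hVsum, ← ha, ← hb]; ring
    -- positivity of the separable part
    have hDpos : 0 < ∑ i, ∑ j, (σ * u i * v j - x i * y j) ^ 2 := by
      rcases (Finset.sum_nonneg fun i (_ : i ∈ Finset.univ) =>
        Finset.sum_nonneg fun j (_ : j ∈ Finset.univ) =>
          sq_nonneg (σ * u i * v j - x i * y j)).lt_or_eq with h | h
      · exact h
      · exfalso
        apply hne
        ext i j
        have hmain := (Finset.sum_eq_zero_iff_of_nonneg fun i _ =>
          Finset.sum_nonneg fun j _ => sq_nonneg (σ * u i * v j - x i * y j)).mp h.symm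
        have h2 := (Finset.sum_eq_zero_iff_of_nonneg fun j _ =>
          sq_nonneg (σ * u i * v j - x i * y j)).mp (hmain i (Finset.mem_univ _)) j
          (Finset.mem_univ _)
        have h3 : σ * u i * v j - x i * y j = 0 := pow_eq_zero_iff two_ne_zero |>.mp h2
        have h4 : σ * u i * v j = x i * y j := by linarith
        simp [hxy i j, Matrix.smul_apply, Matrix.vecMulVec_apply, smul_eq_mul, ← h4,
          mul_assoc]
    -- t equals its "orthogonal" version
    have htp : ∑ i, ∑ j, (x i - a * u i) * Aperp i j * (y j - b * v j)
        = ∑ i, ∑ j, x i * Aperp i j * y j := by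
      have h1 : ∑ i, ∑ j, (x i - a * u i) * Aperp i j * (y j - b * v j)
          = (∑ i, ∑ j, x i * Aperp i j * y j) - a * (∑ i, ∑ j, u i * Aperp i j * y j)
            - b * (∑ i, ∑ j, x i * Aperp i j * v j)
            + (a * b) * (∑ i, ∑ j, u i * Aperp i j * v j) := by
        rw [Finset.mul_sum, Finset.mul_sum, Finset.mul_sum, ← Finset.sum_sub_distrib,
          ← Finset.sum_sub_distrib, ← Finset.sum_add_distrib]
        refine Finset.sum_congr rfl fun i _ => ?_
        rw [Finset.mul_sum, Finset.mul_sum, Finset.mul_sum, ← Finset.sum_sub_distrib,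
          ← Finset.sum_sub_distrib, ← Finset.sum_add_distrib]
        exact Finset.sum_congr rfl fun j _ => by ring
      rw [h1, h0uy y, h0xv x, h0uy v]
      ring
    -- the key inequality
    have h2t : 2 * (∑ i, ∑ j, x i * Aperp i j * y j)
        < ∑ i, ∑ j, (σ * u i * v j - x i * y j) ^ 2 := by
      have hPnn : (0:ℝ) ≤ ∑ i, (x i - a * u i) ^ 2 :=
        Finset.sum_nonneg fun i _ => sq_nonneg _
      have hQnn : (0:ℝ) ≤ ∑ j, (y j - b * v j) ^ 2 :=
        Finset.sum_nonneg fun j _ => sq_nonneg _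
      by_cases hP0 : ∑ i, (x i - a * u i) ^ 2 = 0
      · have hxp : ∀ i, x i - a * u i = 0 := by
          intro i
          exact pow_eq_zero_iff two_ne_zero |>.mp
            ((Finset.sum_eq_zero_iff_of_nonneg fun i _ => sq_nonneg _).mp hP0 i
              (Finset.mem_univ _))
        have ht0 : ∑ i, ∑ j, x i * Aperp i j * y j = 0 := by
          rw [← htp]
          refine Finset.sum_eq_zero fun i _ => Finset.sum_eq_zero fun j _ => ?_
          rw [hxp i, zero_mul, zero_mul]
        rw [ht0, mul_zero]; exact hDpos
      by_cases hQ0 : ∑ j, (y j - b * v j) ^ 2 = 0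
      · have hyp : ∀ j, y j - b * v j = 0 := by
          intro j
          exact pow_eq_zero_iff two_ne_zero |>.mp
            ((Finset.sum_eq_zero_iff_of_nonneg fun j _ => sq_nonneg _).mp hQ0 j
              (Finset.mem_univ _))
        have ht0 : ∑ i, ∑ j, x i * Aperp i j * y j = 0 := by
          rw [← htp]
          refine Finset.sum_eq_zero fun i _ => Finset.sum_eq_zero fun j _ => ?_
          rw [hyp j, mul_zero]
        rw [ht0, mul_zero]; exact hDpos
      · -- both orthogonal components nonzero
        have hPpos : (0:ℝ) < ∑ i, (x i - a * u i) ^ 2 := lt_of_le_of_ne hPnn (Ne.symm hP0)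
        have hQpos : (0:ℝ) < ∑ j, (y j - b * v j) ^ 2 := lt_of_le_of_ne hQnn (Ne.symm hQ0)
        set r := Real.sqrt (∑ i, (x i - a * u i) ^ 2) with hrdef
        set c := Real.sqrt (∑ j, (y j - b * v j) ^ 2) with hcdef
        have hrpos : 0 < r := Real.sqrt_pos.mpr hPpos
        have hcpos : 0 < c := Real.sqrt_pos.mpr hQpos
        have hr2 : r ^ 2 = (∑ i, x i ^ 2) - a ^ 2 := by
          rw [hrdef, Real.sq_sqrt hPnn, perp_sum u x hUsum a ha]
        have hc2 : c ^ 2 = (∑ j, y j ^ 2) - b ^ 2 := by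
          rw [hcdef, Real.sq_sqrt hQnn, perp_sum v y hVsum b hb]
        have hts : ∑ i, ∑ j, x i * Aperp i j * y j ≤ specNorm Aperp * (r * c) := by
          rw [← htp]
          exact spec_bound Aperp _ _
        rw [hD]
        nlinarith [sq_nonneg (a * c - b * r), sq_nonneg (σ - a * b - r * c),
          mul_pos hrpos hcpos, hts, hspec, hr2, hc2]
    -- conclude
    have hFnn : (0:ℝ) ≤ ∑ i, ∑ j, (Aperp i j) ^ 2 :=
      Finset.sum_nonneg fun i _ => Finset.sum_nonneg fun j _ => sq_nonneg _
    have hlt : (∑ i, ∑ j, (Aperp i j) ^ 2)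
        < ∑ i, ∑ j, (σ * u i * v j + Aperp i j - x i * y j) ^ 2 := by
      rw [hS]; linarith
    rw [hgoal]
    unfold frobNorm
    exact Real.sqrt_lt_sqrt hFnn hlt
  · have h : (σ • Matrix.vecMulVec u v + Aperp) - σ • Matrix.vecMulVec u v = Aperp :=
      add_sub_cancel_left _ _
    rw [h]
end
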